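/- arXiv:1308.2694 — 4 statements merged into one kernel-verified Lean document; each statement's English description precedes it below -/
import Mathlib

section
/- For any subset F of facilities, the sum over all clients y of charge(y, F) equals FacLoc(F), the facility-location cost of F. -/
open scoped Classical

/-- `Dmin D F y` is the distance from client `y` to the nearest facility of `F`. -/
noncomputable def Dmin {nf nc : ℕ} (D : Fin nf → Fin nc → ℝ)
    (F : Finset (Fin nf)) (y : Fin nc) : ℝ :=
  if h : F.Nonempty then F.inf' h (fun x => D x y) else 0

/-- `charge y F = D(F,y) + Σ_{x ∈ F} max {0, r_x − D(x,y)}`. -/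
noncomputable def charge {nf nc : ℕ} (D : Fin nf → Fin nc → ℝ) (r : Fin nf → ℝ)
    (y : Fin nc) (F : Finset (Fin nf)) : ℝ :=
  Dmin D F y + ∑ x ∈ F, max 0 (r x - D x y)

/-- `FacLoc F = Σ_{x ∈ F} f_x + Σ_y D(F,y)`. -/
noncomputable def FacLoc {nf nc : ℕ} (f : Fin nf → ℝ) (D : Fin nf → Fin nc → ℝ)
    (F : Finset (Fin nf)) : ℝ :=
  ∑ x ∈ F, f x + ∑ y : Fin nc, Dmin D F y

theorem Finset.sum_max_zero_sub_eq_sum_filter_le {ι α : Type*} [AddCommGroup α] [LinearOrder α]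
    [IsOrderedAddMonoid α] (s : Finset ι) (a : α) (d : ι → α) :
    ∑ y ∈ s, max 0 (a - d y) = ∑ y ∈ s with d y ≤ a, (a - d y) := by
  rw [Finset.sum_filter]
  refine Finset.sum_congr rfl fun y _ => ?_
  split_ifs with h
  · exact max_eq_right (sub_nonneg.mpr h)
  · exact max_eq_left (sub_nonpos.mpr (not_le.mp h).le)

theorem stmt2_general (nf nc : ℕ) (D : Fin nf → Fin nc → ℝ)
    (r : Fin nf → ℝ) (f : Fin nf → ℝ)
    (hf : ∀ x, ∑ y ∈ Finset.univ.filter (fun y => D x y ≤ r x), (r x - D x y) = f x)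
    (F : Finset (Fin nf)) :
    ∑ y : Fin nc, charge D r y F = FacLoc f D F := by
  have opening_cost_eq_sum : ∀ x, ∑ y, max 0 (r x - D x y) = f x := fun x => by
    rw [Finset.sum_max_zero_sub_eq_sum_filter_le, hf]
  simp only [charge, FacLoc, Finset.sum_add_distrib, Finset.sum_comm (s := Finset.univ) (t := F),
    opening_cost_eq_sum, add_comm]

/-- For any (nonempty) subset `F` of facilities,
`Σ_y charge(y, F) = FacLoc(F)`, provided the opening costs satisfy
`f x = Σ_{y : D(x,y) ≤ r x} (r x − D(x,y))`. -/
theorem stmt2 (nf nc : ℕ) (D : Fin nf → Fin nc → ℝ) (hD : ∀ x y, 0 ≤ D x y)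
    (r : Fin nf → ℝ) (f : Fin nf → ℝ)
    (hf : ∀ x, ∑ y ∈ Finset.univ.filter (fun y => D x y ≤ r x), (r x - D x y) = f x)
    (F : Finset (Fin nf)) (hF : F.Nonempty) :
    ∑ y : Fin nc, charge D r y F = FacLoc f D F :=
  stmt2_general nf nc D r f hf F
end

section
/- If y is a client and x_i ∈ F_MP with D(x_i, y) > r_i, then charge(y, F_MP) ≤ D(x_i, y). -/
/-! Separation makes the balls `B(x, r_x)` disjoint on clients, so at most one facility `x₀`
contributes to the penalty sum. If none does, the charge is the nearest distance; if `x₀` does,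
the charge is at most `r_{x₀}`, which separation puts below `D(x_i, y)`. -/

open scoped Classical

/-- Facility-facility distance: `D(x,x') = min_y (D(x,y) + D(x',y))`. -/
noncomputable def Dff {nf nc : ℕ} (D : Fin nf → Fin nc → ℝ)
    (x x' : Fin nf) : ℝ :=
  ⨅ y : Fin nc, (D x y + D x' y)

theorem Dmin_le_of_mem {nf nc : ℕ} {D : Fin nf → Fin nc → ℝ} {F : Finset (Fin nf)} {x : Fin nf}
    (hx : x ∈ F) (y : Fin nc) : Dmin D F y ≤ D x y := by
  rw [Dmin, dif_pos ⟨x, hx⟩]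
  exact Finset.inf'_le _ hx

theorem Dff_le_add {nf nc : ℕ} (D : Fin nf → Fin nc → ℝ) (x x' : Fin nf) (y : Fin nc) :
    Dff D x x' ≤ D x y + D x' y :=
  ciInf_le (Set.finite_range _).bddBelow y

theorem max_lt_of_Dff_gt_of_le {nf nc : ℕ} {D : Fin nf → Fin nc → ℝ} {r : Fin nf → ℝ}
    {x x' : Fin nf} {y : Fin nc} (hsep : Dff D x x' > 2 * max (r x) (r x'))
    (hy : D x y ≤ r x) : max (r x) (r x') < D x' y := by
  have := Dff_le_add D x x' y
  have := le_max_left (r x) (r x')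
  linarith

theorem charge_eq_Dmin_of_forall_le {nf nc : ℕ} {D : Fin nf → Fin nc → ℝ} {r : Fin nf → ℝ}
    {F : Finset (Fin nf)} {y : Fin nc} (hfar : ∀ x ∈ F, r x ≤ D x y) :
    charge D r y F = Dmin D F y := by
  rw [charge, Finset.sum_eq_zero fun x hx => max_eq_left (by linarith [hfar x hx]), add_zero]

theorem charge_le_radius {nf nc : ℕ} {D : Fin nf → Fin nc → ℝ} {r : Fin nf → ℝ}
    {F : Finset (Fin nf)}
    (hsep : ∀ x ∈ F, ∀ x' ∈ F, x ≠ x' → Dff D x x' > 2 * max (r x) (r x'))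
    {y : Fin nc} {x₀ : Fin nf} (hx₀ : x₀ ∈ F) (hy : D x₀ y ≤ r x₀) :
    charge D r y F ≤ r x₀ := by
  have hsum : ∑ x ∈ F, max 0 (r x - D x y) = r x₀ - D x₀ y := by
    rw [Finset.sum_eq_single_of_mem x₀ hx₀ fun x hx hne => ?_, max_eq_right (by linarith)]
    have := max_lt_of_Dff_gt_of_le (hsep x₀ hx₀ x hx hne.symm) hy
    exact max_eq_left (by linarith [le_max_right (r x₀) (r x)])
  rw [charge, hsum]
  linarith [Dmin_le_of_mem (D := D) hx₀ y]

theorem stmt5_general (nf nc : ℕ)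
    (D : Fin nf → Fin nc → ℝ)
    (r : Fin nf → ℝ)
    (FMP : Finset (Fin nf))
    (hsep : ∀ x ∈ FMP, ∀ x' ∈ FMP, x ≠ x' → Dff D x x' > 2 * max (r x) (r x'))
    (y : Fin nc) (xi : Fin nf) (hxi : xi ∈ FMP) (hfar : D xi y > r xi) :
    charge D r y FMP ≤ D xi y := by
  by_cases hin : ∃ x₀ ∈ FMP, D x₀ y ≤ r x₀
  · obtain ⟨x₀, hx₀, hy⟩ := hin
    have hne : x₀ ≠ xi := by rintro rfl; linarith
    have := max_lt_of_Dff_gt_of_le (hsep x₀ hx₀ xi hxi hne) hy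
    linarith [charge_le_radius hsep hx₀ hy, le_max_left (r x₀) (r xi)]
  · push Not at hin
    rw [charge_eq_Dmin_of_forall_le fun x hx => (hin x hx).le]
    exact Dmin_le_of_mem hxi y

/-- If the facilities of `F_MP` are pairwise separated by more than twice the max of
their radii, and `D(x_i, y) > r_i` for some `x_i ∈ F_MP`, then `charge(y, F_MP) ≤ D(x_i, y)`. -/
theorem stmt5 (nf nc : ℕ) (hnc : 0 < nc)
    (D : Fin nf → Fin nc → ℝ) (hD : ∀ x y, 0 ≤ D x y)
    (r : Fin nf → ℝ) (hr : ∀ x, 0 ≤ r x)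
    (FMP : Finset (Fin nf))
    (hsep : ∀ x ∈ FMP, ∀ x' ∈ FMP, x ≠ x' → Dff D x x' > 2 * max (r x) (r x'))
    (y : Fin nc) (xi : Fin nf) (hxi : xi ∈ FMP) (hfar : D xi y > r xi) :
    charge D r y FMP ≤ D xi y :=
  stmt5_general nf nc D r FMP hsep y xi hxi hfar
end

section
/- For any nonempty subset F of facilities, FacLoc(F) ≥ (1/6)·Σ_{y∈C} r̄_y, where r̄_y = min over facilities x of (r_x + D(x,y)). -/
open scoped Classical

/-- `r̄_y = min_x (r_x + D(x,y))`. -/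
noncomputable def rbar {nf nc : ℕ} (D : Fin nf → Fin nc → ℝ) (r : Fin nf → ℝ)
    (y : Fin nc) : ℝ :=
  ⨅ x : Fin nf, (r x + D x y)

/-! Client `y` pays `max (r x - D x y) 0` towards the opening cost of each `x ∈ F`, and adding its
connection cost `D x y` to the nearest facility `x ∈ F` gives `max (r x) (D x y) ≥ (r x + D x y) / 2
≥ r̄_y / 2`. Hence `Σ_y r̄_y ≤ 2 · FacLoc F`, and `1/6` is weaker since `r̄ ≥ 0`. -/

lemma Finset.sum_filter_le_sub_eq_sum_max {ι : Type*} (s : Finset ι) (a : ℝ) (b : ι → ℝ) :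
    ∑ i ∈ s.filter (fun i => b i ≤ a), (a - b i) = ∑ i ∈ s, max (a - b i) 0 := by
  rw [Finset.sum_filter]
  refine Finset.sum_congr rfl fun i _ => ?_
  split_ifs with h
  · exact (max_eq_left (sub_nonneg.mpr h)).symm
  · exact (max_eq_right (sub_nonpos.mpr (not_le.mp h).le)).symm

section

variable {nf nc : ℕ} {D : Fin nf → Fin nc → ℝ} {r : Fin nf → ℝ}

lemma rbar_le (y : Fin nc) (x : Fin nf) : rbar D r y ≤ r x + D x y :=
  ciInf_le (Finite.bddBelow_range _) x

lemma rbar_nonneg (hD : ∀ x y, 0 ≤ D x y) (hr : ∀ x, 0 ≤ r x) (y : Fin nc) :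
    0 ≤ rbar D r y :=
  Real.iInf_nonneg fun x => add_nonneg (hr x) (hD x y)

lemma exists_mem_Dmin_eq {F : Finset (Fin nf)} (hF : F.Nonempty) (y : Fin nc) :
    ∃ x ∈ F, Dmin D F y = D x y := by
  simpa [Dmin, hF] using Finset.exists_mem_eq_inf' hF (fun x => D x y)

lemma rbar_le_two_mul_sum_max_add_Dmin {F : Finset (Fin nf)} (hF : F.Nonempty) (y : Fin nc) :
    rbar D r y ≤ 2 * (∑ x ∈ F, max (r x - D x y) 0 + Dmin D F y) := by
  obtain ⟨x, hxF, hx⟩ := exists_mem_Dmin_eq (D := D) hF y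
  have hshare : max (r x - D x y) 0 ≤ ∑ x ∈ F, max (r x - D x y) 0 :=
    Finset.single_le_sum (f := fun x => max (r x - D x y) 0) (fun _ _ => le_max_right _ _) hxF
  have hle := rbar_le (D := D) (r := r) y x
  rw [hx]
  rcases le_total (D x y) (r x) with h | h <;>
    linarith [le_max_left (r x - D x y) 0, le_max_right (r x - D x y) 0]

lemma sum_rbar_le_two_mul_facLoc {f : Fin nf → ℝ}
    (hf : ∀ x, ∑ y ∈ Finset.univ.filter (fun y => D x y ≤ r x), (r x - D x y) = f x)
    {F : Finset (Fin nf)} (hF : F.Nonempty) :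
    ∑ y : Fin nc, rbar D r y ≤ 2 * FacLoc f D F := by
  have hcost : FacLoc f D F = ∑ y : Fin nc, (∑ x ∈ F, max (r x - D x y) 0 + Dmin D F y) := by
    simp only [FacLoc, ← hf, Finset.sum_filter_le_sub_eq_sum_max, Finset.sum_add_distrib]
    rw [Finset.sum_comm]
  rw [hcost, Finset.mul_sum]
  exact Finset.sum_le_sum fun y _ => rbar_le_two_mul_sum_max_add_Dmin hF y

end

theorem stmt8_general (nf nc : ℕ)
    (D : Fin nf → Fin nc → ℝ) (hD : ∀ x y, 0 ≤ D x y)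
    (r : Fin nf → ℝ) (hr : ∀ x, 0 ≤ r x)
    (f : Fin nf → ℝ)
    (hf : ∀ x, ∑ y ∈ Finset.univ.filter (fun y => D x y ≤ r x), (r x - D x y) = f x)
    (F : Finset (Fin nf)) (hF : F.Nonempty) :
    FacLoc f D F ≥ (1 / 6) * ∑ y : Fin nc, rbar D r y := by
  have hhalf := sum_rbar_le_two_mul_facLoc hf hF
  have hnonneg : 0 ≤ ∑ y : Fin nc, rbar D r y :=
    Finset.sum_nonneg fun y _ => rbar_nonneg hD hr y
  linarith

/-- For any nonempty subset `F` of facilities,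
`FacLoc(F) ≥ (1/6) · Σ_y r̄_y`. -/
theorem stmt8 (nf nc : ℕ) (hnf : 0 < nf)
    (D : Fin nf → Fin nc → ℝ) (hD : ∀ x y, 0 ≤ D x y)
    (r : Fin nf → ℝ) (hr : ∀ x, 0 ≤ r x)
    (f : Fin nf → ℝ)
    (hf : ∀ x, ∑ y ∈ Finset.univ.filter (fun y => D x y ≤ r x), (r x - D x y) = f x)
    (F : Finset (Fin nf)) (hF : F.Nonempty) :
    FacLoc f D F ≥ (1 / 6) * ∑ y : Fin nc, rbar D r y :=
  stmt8_general nf nc D hD r hr f hf F hF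
end

section
/- With t_i' := 4·t_i/n_f for the dissemination recurrence, if n_f > 48 and n_c > 48 then for every i ≥ 5, t_i' ≤ min{4·n_f, n_c/4}. -/
/-!
From `t₅ = n_f · min{n_f, n_c} / 16` on, the bounds `t ≤ n_f²` and `t ≤ n_f n_c / 16` are preserved
by the recurrence. In the quadratic branch `n_c < t` gives `(t + n_c)² ≤ 4t²`, so together the two
bounds yield `(t + n_c)² / (n_f n_c) ≤ min{n_f² / 4, n_f n_c / 64}`, leaving room for the additive
`2 n_f` once `n_f, n_c > 48`; the linear branch is easier. Multiplying by `4 / n_f` gives the claim.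
-/

open scoped Classical

/-- The dissemination recurrence: `t 1 = n_f · min{n_f, n_c}`, `t i = t (i-1) / 2`
for `2 ≤ i ≤ 5`, and for `i > 5` the value depends on whether `t (i-1) > n_c`. -/
noncomputable def tseq (nf nc : ℝ) : ℕ → ℝ
  | 0 => nf * min nf nc
  | (i + 1) =>
    if i = 0 then nf * min nf nc
    else if i + 1 ≤ 5 then tseq nf nc i / 2
    else if tseq nf nc i > nc then 2 * nf + (tseq nf nc i + nc) ^ 2 / (nf * nc)
    else 2 * nf + tseq nf nc i / nf

section Invariant

variable {f c t : ℝ}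

lemma quadratic_step_le_min (hf : 48 < f) (hc : 48 < c) (hct : c < t)
    (ht_sq : t ≤ f ^ 2) (ht_mul : t ≤ f * c / 16) :
    2 * f + (t + c) ^ 2 / (f * c) ≤ min (f ^ 2) (f * c / 16) := by
  have hfc : 0 < f * c := by positivity
  have hsq : (t + c) ^ 2 / (f * c) ≤ 4 * t ^ 2 / (f * c) := by
    gcongr
    nlinarith
  have h_sq : 4 * t ^ 2 / (f * c) ≤ f ^ 2 / 4 := by
    rw [div_le_iff₀ hfc]
    nlinarith [mul_le_mul ht_sq ht_mul (by linarith) (by positivity)]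
  have h_mul : 4 * t ^ 2 / (f * c) ≤ f * c / 64 := by
    rw [div_le_iff₀ hfc]
    nlinarith [mul_le_mul ht_mul ht_mul (by linarith) (by positivity)]
  rw [le_min_iff]
  constructor <;> nlinarith

lemma linear_step_le_min (hf : 48 < f) (hc : 48 < c) (htc : t ≤ c)
    (ht_sq : t ≤ f ^ 2) :
    2 * f + t / f ≤ min (f ^ 2) (f * c / 16) := by
  have hf0 : 0 < f := by linarith
  have h_sq : t / f ≤ f := by
    rw [div_le_iff₀ hf0]
    nlinarith
  have h_c : t / f ≤ c / 16 := by
    rw [div_le_div_iff₀ hf0 (by norm_num)]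
    nlinarith
  rw [le_min_iff]
  constructor <;> nlinarith

end Invariant

lemma tseq_five (f c : ℝ) : tseq f c 5 = f * min f c / 16 := by
  norm_num [tseq]
  ring

lemma tseq_succ_of_five_le (f c : ℝ) {i : ℕ} (hi : 5 ≤ i) :
    tseq f c (i + 1) =
      if tseq f c i > c then 2 * f + (tseq f c i + c) ^ 2 / (f * c)
      else 2 * f + tseq f c i / f := by
  rw [tseq, if_neg (by omega), if_neg (by omega)]

lemma tseq_le_min {f c : ℝ} (hf : 48 < f) (hc : 48 < c) {i : ℕ} (hi : 5 ≤ i) :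
    tseq f c i ≤ min (f ^ 2) (f * c / 16) := by
  induction i, hi using Nat.le_induction with
  | base =>
    rw [tseq_five, le_min_iff]
    constructor
    · nlinarith [min_le_left f c]
    · nlinarith [min_le_right f c]
  | succ i hi ih =>
    obtain ⟨ht_sq, ht_mul⟩ := le_min_iff.mp ih
    rw [tseq_succ_of_five_le f c hi]
    split_ifs with hct
    · exact quadratic_step_le_min hf hc hct ht_sq ht_mul
    · exact linear_step_le_min hf hc (not_lt.mp hct) ht_sq

/-- With `t_i' = 4 t_i / n_f`: if `n_f > 48` and `n_c > 48`, then for every `i ≥ 5`,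
`t_i' ≤ min {4 n_f, n_c / 4}`. -/
theorem stmt13 (nf nc : ℕ) (hnf : 48 < nf) (hnc : 48 < nc) :
    ∀ i : ℕ, 5 ≤ i →
      4 * tseq (nf : ℝ) (nc : ℝ) i / nf ≤ min (4 * (nf : ℝ)) ((nc : ℝ) / 4) := by
  intro i hi
  have hf : (48 : ℝ) < nf := by exact_mod_cast hnf
  have hc : (48 : ℝ) < nc := by exact_mod_cast hnc
  obtain ⟨ht_sq, ht_mul⟩ := le_min_iff.mp (tseq_le_min hf hc hi)
  have hf0 : (0 : ℝ) < nf := by linarith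
  rw [le_min_iff, div_le_iff₀ hf0, div_le_iff₀ hf0]
  constructor
  · nlinarith
  · linarith [show (nc : ℝ) / 4 * nf = 4 * (nf * nc / 16) by ring]
end
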